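/- arXiv:2206.06491 — 2 statements merged into one kernel-verified Lean document; each statement's English description precedes it below -/
import Mathlib

section
/- Let μ be a probability measure, 0 ≤ h ≤ M₀ a measurable function with E_μ[h] = 1, and set γ = Var_μ(h)/4. Then Var_μ((h − γ)₊) ≥ (1/2) Var_μ(h), where (x)₊ = max(x, 0). -/
open MeasureTheory ProbabilityTheory

/-!
Truncating `h ≥ 0` at level `γ ≥ 0` can only shrink its mean, so `(E (h - γ)₊)² ≤ (E h)²`, while
`((a - γ)₊)² ≥ a² - 2γa` for `a ≥ 0` costs at most `2γ E h` of second moment. Hence the variance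
drops by at most `2γ E h`, which is `Var h / 2` when `E h = 1` and `γ = Var h / 4`.
-/

lemma sq_sub_two_mul_le_sq_max_sub_zero {a c : ℝ} (ha : 0 ≤ a) (hc : 0 ≤ c) :
    a ^ 2 - 2 * c * a ≤ max (a - c) 0 ^ 2 := by
  rcases le_total a c with hac | hca
  · rw [max_eq_right (sub_nonpos.2 hac)]
    nlinarith
  · rw [max_eq_left (sub_nonneg.2 hca)]
    nlinarith

theorem variance_sub_two_mul_integral_le_variance_max_sub_zero {Ω : Type*} [MeasurableSpace Ω]
    {μ : Measure Ω} [IsProbabilityMeasure μ] {h : Ω → ℝ} (hL2 : MemLp h 2 μ)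
    (hnonneg : 0 ≤ᵐ[μ] h) {c : ℝ} (hc : 0 ≤ c) :
    variance h μ - 2 * c * μ[h] ≤ variance (fun x => max (h x - c) 0) μ := by
  set g : Ω → ℝ := fun x => max (h x - c) 0
  have hgL2 : MemLp g 2 μ := (hL2.sub (memLp_const c)).pos_part
  have hh : Integrable h μ := hL2.integrable one_le_two
  have hg : Integrable g μ := hgL2.integrable one_le_two
  have hg_nonneg : 0 ≤ μ[g] := integral_nonneg fun x => le_max_right _ _
  have hg_le : μ[g] ≤ μ[h] := integral_mono_ae hg hh <| hnonneg.mono fun x hx =>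
    max_le (by linarith) hx
  have hmean_sq : μ[g] ^ 2 ≤ μ[h] ^ 2 := pow_le_pow_left₀ hg_nonneg hg_le 2
  have hsq : ∫ x, h x ^ 2 ∂μ - 2 * c * μ[h] ≤ ∫ x, g x ^ 2 ∂μ := by
    have := integral_mono_ae (hL2.integrable_sq.sub (hh.const_mul (2 * c))) hgL2.integrable_sq <|
      hnonneg.mono fun x hx => sq_sub_two_mul_le_sq_max_sub_zero hx hc
    simp only [Pi.sub_apply] at this
    rwa [integral_sub hL2.integrable_sq (hh.const_mul _), integral_const_mul] at this
  rw [variance_eq_sub hL2, variance_eq_sub hgL2]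
  simp only [Pi.pow_apply]
  linarith

/-- If `0 ≤ h ≤ M₀` with `E_μ[h] = 1` and `γ = Var_μ(h)/4`, then
`Var_μ((h − γ)₊) ≥ (1/2) Var_μ(h)`. -/
theorem variance_pos_part_ge_half_variance {d : ℕ}
    (μ : Measure (EuclideanSpace ℝ (Fin d))) [IsProbabilityMeasure μ]
    (h : EuclideanSpace ℝ (Fin d) → ℝ) (M₀ : ℝ)
    (hmeas : Measurable h) (hnonneg : ∀ x, 0 ≤ h x) (hbdd : ∀ x, h x ≤ M₀)
    (hmean : ∫ x, h x ∂μ = 1) :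
    variance h μ / 2 ≤
      variance (fun x => max (h x - variance h μ / 4) 0) μ := by
  have hL2 : MemLp h 2 μ := MemLp.of_bound hmeas.aestronglyMeasurable M₀ <|
    .of_forall fun x => by rw [Real.norm_of_nonneg (hnonneg x)]; exact hbdd x
  have hvar_drop := variance_sub_two_mul_integral_le_variance_max_sub_zero hL2
    (.of_forall hnonneg) (div_nonneg (variance_nonneg h μ) zero_le_four)
  rw [hmean] at hvar_drop
  linarith
end

section
/- Let π_n be a probability density on ℝ^d of the form π_n(θ) ∝ exp(−V_n(√n(θ − θ̂))) and let K ⊂ ℝ^d be compact. Define μ₀ as the Gaussian N_d(θ̂, n⁻¹ Ĩ) conditioned on {θ : √n(θ − θ̂) ∈ K}, where Ĩ is symmetric positive definite. Then μ₀ is M₀-warm with respect to π_n with log M₀ ≤ −log π_n({θ : √n(θ−θ̂) ∈ K}) + sup_{ξ∈K} |ξᵀ(Ĩ⁻¹ − J)ξ| + 2 sup_{ξ∈K} |V_n(ξ) − (1/2)ξᵀJξ|, for any symmetric positive definite matrix J. -/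
/-!
On `S`, write `ξ = √n (θ - θ̂)`. The Gaussian exponent is `½ ξᵀĨ⁻¹ξ`, which differs from `V(ξ)` by at
most `c = a/2 + b` (compare both with `½ ξᵀJξ`). Hence the two unnormalised densities `f` and `g`
are within a factor `e^c` of each other on `S`, and conditioning `g` on `S` costs one factor for the
numerator and one for the normaliser: `μ₀(E) ≤ e^{2c} π_n(E) / π_n(S)`.
-/

open MeasureTheory

section DensityComparison

variable {α : Type*} [MeasurableSpace α] {μ : Measure α} {f g : α → ℝ} {S E : Set α} {C : ℝ}

theorem setIntegral_inter_div_le_sq_mul_div (hS : MeasurableSet S)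
    (hf₀ : 0 ≤ f) (hg₀ : 0 ≤ g) (hfE : IntegrableOn f E μ) (hfS : IntegrableOn f S μ)
    (hgm : AEStronglyMeasurable g (μ.restrict S))
    (hgf : ∀ x ∈ S, g x ≤ C * f x) (hfg : ∀ x ∈ S, f x ≤ C * g x)
    (hfS_pos : 0 < ∫ x in S, f x ∂μ) :
    (∫ x in E ∩ S, g x ∂μ) / (∫ x in S, g x ∂μ)
      ≤ C ^ 2 * (∫ x in E, f x ∂μ) / (∫ x in S, f x ∂μ) := by
  have hgS : IntegrableOn g S μ :=
    (hfS.const_mul C).mono' hgm <| (ae_restrict_iff' hS).2 <| .of_forall fun x hx => by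
      rw [Real.norm_of_nonneg (hg₀ x)]; exact hgf x hx
  have hf_le : ∫ x in S, f x ∂μ ≤ C * ∫ x in S, g x ∂μ := by
    rw [← integral_const_mul]
    exact setIntegral_mono_on hfS (hgS.const_mul C) hS hfg
  have hCg_pos : 0 < C * ∫ x in S, g x ∂μ := hfS_pos.trans_le hf_le
  have hg_pos : 0 < ∫ x in S, g x ∂μ :=
    (integral_nonneg hg₀).lt_of_ne fun h => by simp [← h] at hCg_pos
  have hC : 0 < C := pos_of_mul_pos_left hCg_pos hg_pos.le
  have hgf_ae : ∀ᵐ x ∂μ.restrict (E ∩ S), g x ≤ C * f x :=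
    ae_restrict_of_ae_restrict_of_subset Set.inter_subset_right (ae_restrict_of_forall_mem hS hgf)
  have hg_le : ∫ x in E ∩ S, g x ∂μ ≤ C * ∫ x in E, f x ∂μ := calc
    ∫ x in E ∩ S, g x ∂μ ≤ ∫ x in E ∩ S, C * f x ∂μ :=
      integral_mono_ae (hgS.mono_set Set.inter_subset_right)
        ((hfS.mono_set Set.inter_subset_right).const_mul C) hgf_ae
    _ = C * ∫ x in E ∩ S, f x ∂μ := integral_const_mul C _
    _ ≤ C * ∫ x in E, f x ∂μ := mul_le_mul_of_nonneg_left
      (setIntegral_mono_set hfE (.of_forall hf₀) Set.inter_subset_left.eventuallyLE) hC.le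
  rw [div_le_div_iff₀ hg_pos hfS_pos]
  calc (∫ x in E ∩ S, g x ∂μ) * ∫ x in S, f x ∂μ
      ≤ (C * ∫ x in E, f x ∂μ) * (C * ∫ x in S, g x ∂μ) := by
        gcongr
        exact mul_nonneg hC.le (integral_nonneg hf₀)
    _ = C ^ 2 * (∫ x in E, f x ∂μ) * ∫ x in S, g x ∂μ := by ring

end DensityComparison

section QuadraticForms

open Matrix

variable {ι : Type*} [Fintype ι]

theorem smul_dotProduct_mulVec_smul {R : Type*} [CommRing R] (t : R) (A : Matrix ι ι R)
    (v : ι → R) : (t • v) ⬝ᵥ A *ᵥ (t • v) = t ^ 2 * (v ⬝ᵥ A *ᵥ v) := by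
  rw [mulVec_smul, smul_dotProduct, dotProduct_smul, smul_eq_mul, smul_eq_mul]
  ring

theorem abs_sub_half_dotProduct_mulVec_le (A J : Matrix ι ι ℝ) (ξ : ι → ℝ) {v a b : ℝ}
    (ha : |ξ ⬝ᵥ (A - J) *ᵥ ξ| ≤ a) (hb : |v - 1 / 2 * ξ ⬝ᵥ J *ᵥ ξ| ≤ b) :
    |v - 1 / 2 * ξ ⬝ᵥ A *ᵥ ξ| ≤ a / 2 + b := by
  rw [sub_mulVec, dotProduct_sub] at ha
  rw [abs_le] at *
  constructor <;> linarith

end QuadraticForms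

theorem Real.exp_neg_le_exp_mul_exp_neg {x y c : ℝ} (h : |x - y| ≤ c) :
    Real.exp (-y) ≤ Real.exp c * Real.exp (-x) := by
  rw [← Real.exp_add, Real.exp_le_exp]
  linarith [le_abs_self (x - y)]

open Real in
theorem warming_parameter_control_general (d n : ℕ)
    (θh : Fin d → ℝ)
    (Itil J : Matrix (Fin d) (Fin d) ℝ)
    (V : (Fin d → ℝ) → ℝ)
    (K : Set (Fin d → ℝ)) (hKm : MeasurableSet K)
    (f g : (Fin d → ℝ) → ℝ)
    (hf : ∀ θ, f θ = Real.exp (-(V (Real.sqrt n • (θ - θh)))))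
    (hg : ∀ θ, g θ = Real.exp (-((n : ℝ) / 2 *
      dotProduct (θ - θh) ((Itil⁻¹).mulVec (θ - θh)))))
    (hfint : Integrable f)
    (S : Set (Fin d → ℝ)) (hS : S = {θ | Real.sqrt n • (θ - θh) ∈ K})
    (hfS : 0 < ∫ θ in S, f θ)
    (a b : ℝ)
    (ha : ∀ ξ ∈ K, |dotProduct ξ ((Itil⁻¹ - J).mulVec ξ)| ≤ a)
    (hb : ∀ ξ ∈ K, |V ξ - (1 / 2) * dotProduct ξ (J.mulVec ξ)| ≤ b)
    (E : Set (Fin d → ℝ)) :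
    (∫ θ in E ∩ S, g θ) / (∫ θ in S, g θ)
      ≤ Real.exp (-(Real.log ((∫ θ in S, f θ) / (∫ θ, f θ))) + a + 2 * b) *
        ((∫ θ in E, f θ) / (∫ θ, f θ)) := by
  have hSm : MeasurableSet S := hS ▸ hKm.preimage (by fun_prop)
  have hclose : ∀ θ ∈ S, |V (√n • (θ - θh))
      - n / 2 * dotProduct (θ - θh) ((Itil⁻¹).mulVec (θ - θh))| ≤ a / 2 + b := by
    intro θ hθ
    rw [hS] at hθ
    have := abs_sub_half_dotProduct_mulVec_le _ _ _ (ha _ hθ) (hb _ hθ)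
    rwa [smul_dotProduct_mulVec_smul, sq_sqrt n.cast_nonneg, ← mul_assoc, one_div_mul_eq_div]
      at this
  have hf₀ : 0 ≤ f := fun θ => (hf θ).symm ▸ (exp_pos _).le
  have hg₀ : 0 ≤ g := fun θ => (hg θ).symm ▸ (exp_pos _).le
  have hgc : Continuous g := by
    rw [funext hg]
    fun_prop
  have hgf : ∀ θ ∈ S, g θ ≤ exp (a / 2 + b) * f θ := fun θ hθ => by
    rw [hf, hg]
    exact exp_neg_le_exp_mul_exp_neg (hclose θ hθ)
  have hfg : ∀ θ ∈ S, f θ ≤ exp (a / 2 + b) * g θ := fun θ hθ => by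
    rw [hf, hg]
    exact exp_neg_le_exp_mul_exp_neg (abs_sub_comm (V _) _ ▸ hclose θ hθ)
  have hratio := setIntegral_inter_div_le_sq_mul_div (E := E) hSm hf₀ hg₀ hfint.integrableOn
    hfint.integrableOn hgc.aestronglyMeasurable hgf hfg hfS
  have hf_pos : 0 < ∫ θ, f θ := hfS.trans_le (setIntegral_le_integral hfint (.of_forall hf₀))
  convert hratio using 1
  rw [add_assoc, exp_add, exp_neg, exp_log (div_pos hfS hf_pos), sq, ← exp_add,
    show a / 2 + b + (a / 2 + b) = a + 2 * b by ring]
  field_simp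

/-- Warming parameter control (Lemma on warm starts): for the pseudo-posterior
`π_n(θ) ∝ exp(−V_n(√n(θ−θ̂)))` and the Gaussian `N_d(θ̂, n⁻¹Ĩ)` conditioned on
`S = {θ : √n(θ−θ̂) ∈ K}`, the conditioned Gaussian `μ₀` is `M₀`-warm with
respect to `π_n`, with `log M₀ ≤ −log π_n(S) + sup_{ξ∈K}|ξᵀ(Ĩ⁻¹−J)ξ|
+ 2 sup_{ξ∈K}|V_n(ξ) − (1/2)ξᵀJξ|` for any symmetric positive definite `J`.
The suprema are expressed via arbitrary upper bounds `a`, `b`, and the measures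
via their explicit densities. -/
theorem warming_parameter_control (d n : ℕ) (hn : 0 < n)
    (θh : Fin d → ℝ)
    (Itil J : Matrix (Fin d) (Fin d) ℝ) (hItil : Itil.PosDef) (hJ : J.PosDef)
    (V : (Fin d → ℝ) → ℝ) (hV : Measurable V)
    (K : Set (Fin d → ℝ)) (hK : IsCompact K) (hKm : MeasurableSet K)
    (f g : (Fin d → ℝ) → ℝ)
    (hf : ∀ θ, f θ = Real.exp (-(V (Real.sqrt n • (θ - θh)))))
    (hg : ∀ θ, g θ = Real.exp (-((n : ℝ) / 2 *
      dotProduct (θ - θh) ((Itil⁻¹).mulVec (θ - θh)))))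
    (hfint : Integrable f)
    (S : Set (Fin d → ℝ)) (hS : S = {θ | Real.sqrt n • (θ - θh) ∈ K})
    (hgS : 0 < ∫ θ in S, g θ) (hfS : 0 < ∫ θ in S, f θ)
    (a b : ℝ)
    (ha : ∀ ξ ∈ K, |dotProduct ξ ((Itil⁻¹ - J).mulVec ξ)| ≤ a)
    (hb : ∀ ξ ∈ K, |V ξ - (1 / 2) * dotProduct ξ (J.mulVec ξ)| ≤ b)
    (E : Set (Fin d → ℝ)) (hE : MeasurableSet E) :
    (∫ θ in E ∩ S, g θ) / (∫ θ in S, g θ)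
      ≤ Real.exp (-(Real.log ((∫ θ in S, f θ) / (∫ θ, f θ))) + a + 2 * b) *
        ((∫ θ in E, f θ) / (∫ θ, f θ)) :=
  warming_parameter_control_general d n θh Itil J V K hKm f g hf hg hfint S hS hfS a b ha hb E
end
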